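/- Let P and Q be Borel probability measures on ℝ supported in [−R, R]. Then the squared 2-Wasserstein distance satisfies D(P,Q) ≤ 2R·∫_ℝ |F_P(z) − F_Q(z)| dz ≤ 4R²·sup_{z∈ℝ} |F_P(z) − F_Q(z)|; in particular it is bounded by 4R² times the Kolmogorov distance between P and Q. -/

import Mathlib

open MeasureTheory ProbabilityTheory
open scoped RealInnerProductSpace ENNReal

noncomputable section

/-- Squared 2-Wasserstein distance between Borel probability measures on ℝ. -/
def sqW2 (P Q : Measure ℝ) : ℝ :=
  sInf {r : ℝ | ∃ π : Measure (ℝ × ℝ), IsProbabilityMeasure π ∧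
    π.fst = P ∧ π.snd = Q ∧ r = ∫ p : ℝ × ℝ, (p.1 - p.2) ^ 2 ∂π}

/-- 1-Wasserstein distance. -/
def W1 (P Q : Measure ℝ) : ℝ :=
  sInf {r : ℝ | ∃ π : Measure (ℝ × ℝ), IsProbabilityMeasure π ∧
    π.fst = P ∧ π.snd = Q ∧ r = ∫ p : ℝ × ℝ, |p.1 - p.2| ∂π}

/-- Pushforward of a measure on ℝ^d under the projection x ↦ βᵀx. -/
def proj {d : ℕ} (β : EuclideanSpace ℝ (Fin d)) (μ : Measure (EuclideanSpace ℝ (Fin d))) :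
    Measure ℝ := μ.map (fun x => ⟪β, x⟫)

/-- Empirical measure of a finite tuple of points. -/
def emp {α : Type*} [MeasurableSpace α] {n : ℕ} (xs : Fin n → α) : Measure α :=
  (n : ℝ≥0∞)⁻¹ • ∑ i, Measure.dirac (xs i)

/-- The feasible set B = {β : ‖β‖₂ ≤ 1, β₁ ≥ 0}. -/
def ballB (d : ℕ) (hd : 0 < d) : Set (EuclideanSpace ℝ (Fin d)) :=
  {β | ‖β‖ ≤ 1 ∧ 0 ≤ β ⟨0, hd⟩}

/-- μ admits a continuous density supported in (and nonzero on) the Euclidean ball of radius R. -/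
def HasContDensityBall {d : ℕ} (R : ℝ) (μ : Measure (EuclideanSpace ℝ (Fin d))) : Prop :=
  ∃ f : EuclideanSpace ℝ (Fin d) → ℝ, Continuous f ∧ (∀ x, 0 ≤ f x) ∧
    (∀ x, 0 < f x ↔ x ∈ Metric.ball (0 : EuclideanSpace ℝ (Fin d)) R) ∧
    μ = volume.withDensity (fun x => ENNReal.ofReal (f x))

/-- Cumulative distribution function of a measure on ℝ. -/
def mcdf (μ : Measure ℝ) (z : ℝ) : ℝ := (μ (Set.Iic z)).toReal

/-- Quantile function. -/
def quant (μ : Measure ℝ) (p : ℝ) : ℝ := sInf {x : ℝ | p ≤ mcdf μ x}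

/-- Kolmogorov distance. -/
def kolm (P Q : Measure ℝ) : ℝ := ⨆ z : ℝ, |mcdf P z - mcdf Q z|

/-- Lévy distance. -/
def levy (P Q : Measure ℝ) : ℝ :=
  sInf {ε : ℝ | 0 < ε ∧ ∀ x : ℝ, mcdf Q (x - ε) - ε ≤ mcdf P x ∧ mcdf P x ≤ mcdf Q (x + ε) + ε}

/-- Lévy–Prokhorov distance. -/
def prokh (P Q : Measure ℝ) : ℝ :=
  sInf {ε : ℝ | 0 < ε ∧ ∀ A : Set ℝ, MeasurableSet A →
    (P A).toReal ≤ (Q (Metric.thickening ε A)).toReal + ε ∧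
    (Q A).toReal ≤ (P (Metric.thickening ε A)).toReal + ε}

/-- i.i.d. samples with a given law. -/
def IIDSamples {Ω α ι : Type*} [MeasurableSpace Ω] [MeasurableSpace α]
    (P : Measure Ω) (Zs : ι → Ω → α) (law : Measure α) : Prop :=
  iIndepFun Zs P ∧
    ∀ i, Measurable (Zs i) ∧ P.map (Zs i) = law

/-- Supremum of densities of projections of ν along directions in B. -/
def projDensitySup {d : ℕ} (hd : 0 < d) (ν : Measure (EuclideanSpace ℝ (Fin d))) : ℝ :=
  sSup {z : ℝ | ∃ α ∈ ballB d hd, ∃ y : ℝ, z = ((proj α ν).rnDeriv volume y).toReal}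

/-- ℓ¹ norm of the covariance matrix of X. -/
def covL1 {Ω : Type*} [MeasurableSpace Ω] (P : Measure Ω) {d : ℕ}
    (X : Ω → EuclideanSpace ℝ (Fin d)) : ℝ :=
  ∑ i, ∑ j, |(∫ ω, X ω i * X ω j ∂P) - (∫ ω, X ω i ∂P) * (∫ ω, X ω j ∂P)|

/-- T_a(X,Y). -/
def Ta {Ω : Type*} [MeasurableSpace Ω] (P : Measure Ω) {d : ℕ}
    (X Y : Ω → EuclideanSpace ℝ (Fin d)) (a : ℝ) : ℝ :=
  |(P {ω | ∀ i, |X ω i| ≤ a}).toReal - (P {ω | ∀ i, |Y ω i| ≤ a}).toReal|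

/-!
Couple `P` and `Q` through their quantile functions evaluated at a single uniform variable on
`(0, 1)`. For measures supported in `[a, b]` the two quantiles differ by at most `b - a`, so
`(x - y)² ≤ (b - a) |x - y|` bounds the cost of this coupling by `(b - a) ∫₀¹ |q_P - q_Q|`.
By Fubini this `L¹` distance of the quantile functions equals `∫ |F_P - F_Q|`: both compute the
area of the region between the graphs of `F_P` and `F_Q`. Finally `|F_P - F_Q|` vanishes
outside `[a, b]` and is bounded there by the Kolmogorov distance.
-/

open Set
open scoped symmDiff

lemma mcdf_eq_cdf (μ : Measure ℝ) [IsProbabilityMeasure μ] : mcdf μ = cdf μ :=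
  funext fun x => (cdf_eq_real μ x).symm

section Quantile

variable {P : Measure ℝ} [IsProbabilityMeasure P] {p : ℝ}

theorem quant_le_iff (hp : p ∈ Ioo (0 : ℝ) 1) (x : ℝ) : quant P p ≤ x ↔ p ≤ cdf P x := by
  have hS : {y | p ≤ mcdf P y} = {y | p ≤ cdf P y} := by rw [mcdf_eq_cdf]
  rw [quant, hS]
  obtain ⟨a, ha⟩ := ((tendsto_cdf_atBot P).eventually (gt_mem_nhds hp.1)).exists
  obtain ⟨b, hb⟩ := ((tendsto_cdf_atTop P).eventually (lt_mem_nhds hp.2)).exists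
  have hbdd : BddBelow {y | p ≤ cdf P y} := ⟨a, fun y hy => by
    by_contra! hya
    exact (hy.trans (monotone_cdf P hya.le)).not_gt ha⟩
  refine ⟨fun h => ?_, fun h => csInf_le hbdd h⟩
  -- right-continuity of the cdf is what makes the infimum attained
  have hright : ∀ y > x, p ≤ cdf P y := fun y hy => by
    obtain ⟨s, hs, hsy⟩ := (csInf_lt_iff hbdd ⟨b, hb.le⟩).1 (h.trans_lt hy)
    exact hs.trans (monotone_cdf P hsy.le)
  exact ge_of_tendsto ((cdf P).right_continuous x |>.mono Ioi_subset_Ici_self)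
    (eventually_nhdsWithin_of_forall hright)

theorem monotoneOn_quant : MonotoneOn (quant P) (Ioo 0 1) := fun _ hp _ hq hpq =>
  (quant_le_iff hp _).2 (hpq.trans ((quant_le_iff hq _).1 le_rfl))

theorem aemeasurable_quant : AEMeasurable (quant P) (volume.restrict (Ioo 0 1)) :=
  aemeasurable_restrict_of_monotoneOn measurableSet_Ioo monotoneOn_quant

end Quantile

theorem Set.Iic_symmDiff_Iic {α : Type*} [LinearOrder α] (a b : α) :
    Iic a ∆ Iic b = Ioc (min a b) (max a b) := by
  ext x
  simp only [mem_symmDiff, mem_Iic, mem_Ioc, min_lt_iff, le_max_iff]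
  rcases le_total a b with h | h <;> grind

theorem Set.Ici_symmDiff_Ici {α : Type*} [LinearOrder α] (a b : α) :
    Ici a ∆ Ici b = Ico (min a b) (max a b) := by
  ext x
  simp only [mem_symmDiff, mem_Ici, mem_Ico, min_le_iff, lt_max_iff]
  rcases le_total a b with h | h <;> grind

theorem restrict_Ioo_zero_one_apply {s : Set ℝ} (hs : s ⊆ Icc 0 1) :
    volume.restrict (Ioo (0 : ℝ) 1) s = volume s := by
  rw [Measure.restrict_congr_set Ioo_ae_eq_Icc, Measure.restrict_eq_self _ hs]

instance isProbabilityMeasure_restrict_Ioo_zero_one :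
    IsProbabilityMeasure (volume.restrict (Ioo (0 : ℝ) 1)) :=
  ⟨by simp⟩

theorem map_quant_restrict_Ioo (P : Measure ℝ) [IsProbabilityMeasure P] :
    (volume.restrict (Ioo 0 1)).map (quant P) = P := by
  refine Measure.ext_of_Iic _ _ fun x => ?_
  have hpre : quant P ⁻¹' Iic x =ᵐ[volume.restrict (Ioo 0 1)] Icc 0 (cdf P x) := by
    filter_upwards [ae_restrict_mem measurableSet_Ioo] with p hp
    change (p ∈ quant P ⁻¹' Iic x) = (p ∈ Icc 0 (cdf P x))
    simp [quant_le_iff hp, hp.1.le]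
  rw [Measure.map_apply₀ aemeasurable_quant measurableSet_Iic.nullMeasurableSet,
    measure_congr hpre, restrict_Ioo_zero_one_apply (Icc_subset_Icc_right (cdf_le_one P x)),
    Real.volume_Icc, sub_zero, ofReal_cdf]

theorem lintegral_abs_quant_sub_quant (P Q : Measure ℝ) [IsProbabilityMeasure P]
    [IsProbabilityMeasure Q] :
    ∫⁻ p in Ioo 0 1, ENNReal.ofReal |quant P p - quant Q p| =
      ∫⁻ z, ENNReal.ofReal |cdf P z - cdf Q z| := by
  set E : Set (ℝ × ℝ) := {q | q.1 ≤ cdf P q.2} ∆ {q | q.1 ≤ cdf Q q.2}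
  have hE : MeasurableSet E :=
    (measurableSet_le measurable_fst ((monotone_cdf P).measurable.comp measurable_snd)).symmDiff
      (measurableSet_le measurable_fst ((monotone_cdf Q).measurable.comp measurable_snd))
  calc ∫⁻ p in Ioo 0 1, ENNReal.ofReal |quant P p - quant Q p|
      = ∫⁻ p in Ioo 0 1, volume (Prod.mk p ⁻¹' E) := by
        refine lintegral_congr_ae ?_
        filter_upwards [ae_restrict_mem measurableSet_Ioo] with p hp
        have hslice : Prod.mk p ⁻¹' E = Ici (quant P p) ∆ Ici (quant Q p) := by
          ext z
          simp [E, mem_symmDiff, quant_le_iff hp]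
        rw [hslice, Ici_symmDiff_Ici, Real.volume_Ico, max_sub_min_eq_abs']
    _ = ∫⁻ z, volume.restrict (Ioo 0 1) ((·, z) ⁻¹' E) := by
        rw [← Measure.prod_apply hE, Measure.prod_apply_symm hE]
    _ = ∫⁻ z, ENNReal.ofReal |cdf P z - cdf Q z| := by
        refine lintegral_congr fun z => ?_
        have hslice : (·, z) ⁻¹' E = Iic (cdf P z) ∆ Iic (cdf Q z) := rfl
        have hsub : Ioc (min (cdf P z) (cdf Q z)) (max (cdf P z) (cdf Q z)) ⊆ Icc 0 1 :=
          Ioc_subset_Icc_self.trans (Icc_subset_Icc (le_min (cdf_nonneg P z) (cdf_nonneg Q z))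
            (max_le (cdf_le_one P z) (cdf_le_one Q z)))
        rw [hslice, Iic_symmDiff_Iic, restrict_Ioo_zero_one_apply hsub, Real.volume_Ioc,
          max_sub_min_eq_abs']

theorem sqW2_le_integral_of_map_eq {Ω : Type*} [MeasurableSpace Ω] {μ : Measure Ω}
    [IsProbabilityMeasure μ] {P Q : Measure ℝ} {f g : Ω → ℝ} (hf : AEMeasurable f μ)
    (hg : AEMeasurable g μ) (hfP : μ.map f = P) (hgQ : μ.map g = Q) :
    sqW2 P Q ≤ ∫ ω, (f ω - g ω) ^ 2 ∂μ := by
  have hfg : AEMeasurable (fun ω => (f ω, g ω)) μ := hf.prodMk hg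
  refine csInf_le ⟨0, ?_⟩ ⟨_, Measure.isProbabilityMeasure_map hfg,
    by rw [Measure.fst_map_prodMk₀ hg, hfP], by rw [Measure.snd_map_prodMk₀ hf, hgQ], ?_⟩
  · rintro _ ⟨π, -, -, -, rfl⟩
    exact integral_nonneg fun _ => sq_nonneg _
  · rw [integral_map hfg (by fun_prop)]

section Support

variable {P : Measure ℝ} [IsProbabilityMeasure P] {a b : ℝ}

theorem cdf_eq_zero_of_lt (hP : P (Icc a b)ᶜ = 0) {x : ℝ} (hx : x < a) : cdf P x = 0 := by
  have hnull : P (Iic x) = 0 :=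
    measure_mono_null (fun y hy => fun hy' => (hy'.1.trans hy).not_gt hx) hP
  rw [cdf_eq_real, measureReal_def, hnull, ENNReal.toReal_zero]

theorem cdf_eq_one_of_le (hP : P (Icc a b)ᶜ = 0) {x : ℝ} (hx : b ≤ x) : cdf P x = 1 := by
  have hnull : P (Iic x)ᶜ = 0 :=
    measure_mono_null (compl_subset_compl.2 fun _ hy => hy.2.trans hx) hP
  rw [cdf_eq_real, measureReal_def, (prob_compl_eq_zero_iff measurableSet_Iic).1 hnull,
    ENNReal.toReal_one]

theorem quant_mem_Icc (hP : P (Icc a b)ᶜ = 0) {p : ℝ} (hp : p ∈ Ioo (0 : ℝ) 1) :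
    quant P p ∈ Icc a b := by
  refine ⟨le_of_not_gt fun hlt => ?_, (quant_le_iff hp b).2 ?_⟩
  · have hcdf := (quant_le_iff (P := P) hp _).1 le_rfl
    rw [cdf_eq_zero_of_lt hP hlt] at hcdf
    exact hcdf.not_gt hp.1
  · rw [cdf_eq_one_of_le hP le_rfl]
    exact hp.2.le

end Support

theorem sqW2_le_mul_integral_abs_cdf_sub {P Q : Measure ℝ} [IsProbabilityMeasure P]
    [IsProbabilityMeasure Q] {a b : ℝ} (hP : P (Icc a b)ᶜ = 0) (hQ : Q (Icc a b)ᶜ = 0) :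
    sqW2 P Q ≤ (b - a) * ∫ z, |cdf P z - cdf Q z| := by
  set μ₀ := volume.restrict (Ioo (0 : ℝ) 1)
  set d : ℝ → ℝ := fun p => quant P p - quant Q p
  have hd : AEMeasurable d μ₀ := aemeasurable_quant.sub aemeasurable_quant
  have hdist : ∀ᵐ p ∂μ₀, |d p| ≤ b - a := by
    filter_upwards [ae_restrict_mem measurableSet_Ioo] with p hp
    exact Real.dist_le_of_mem_Icc (quant_mem_Icc hP hp) (quant_mem_Icc hQ hp)
  have hsq : ∀ᵐ p ∂μ₀, d p ^ 2 ≤ (b - a) * |d p| := by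
    filter_upwards [hdist] with p hp
    rw [← sq_abs, sq]
    exact mul_le_mul_of_nonneg_right hp (abs_nonneg _)
  have habs : Integrable (fun p => |d p|) μ₀ :=
    .of_bound hd.abs.aestronglyMeasurable (b - a) (by simpa using hdist)
  have hsq_int : Integrable (fun p => d p ^ 2) μ₀ :=
    (habs.const_mul _).mono' (hd.pow_const 2).aestronglyMeasurable
      (by filter_upwards [hsq] with p hp; rwa [Real.norm_eq_abs, abs_of_nonneg (sq_nonneg _)])
  have hcdf : Measurable fun z => |cdf P z - cdf Q z| :=
    ((monotone_cdf P).measurable.sub (monotone_cdf Q).measurable).abs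
  have hL1 : ∫ p, |d p| ∂μ₀ = ∫ z, |cdf P z - cdf Q z| := by
    rw [integral_eq_lintegral_of_nonneg_ae (.of_forall fun _ => abs_nonneg _)
        hd.abs.aestronglyMeasurable,
      integral_eq_lintegral_of_nonneg_ae (.of_forall fun _ => abs_nonneg _)
        hcdf.aestronglyMeasurable, lintegral_abs_quant_sub_quant]
  calc sqW2 P Q ≤ ∫ p, d p ^ 2 ∂μ₀ :=
        sqW2_le_integral_of_map_eq aemeasurable_quant aemeasurable_quant
          (map_quant_restrict_Ioo P) (map_quant_restrict_Ioo Q)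
    _ ≤ ∫ p, (b - a) * |d p| ∂μ₀ := integral_mono_ae hsq_int (habs.const_mul _) hsq
    _ = (b - a) * ∫ z, |cdf P z - cdf Q z| := by rw [integral_const_mul, hL1]

theorem abs_cdf_sub_cdf_le_kolm (P Q : Measure ℝ) [IsProbabilityMeasure P]
    [IsProbabilityMeasure Q] (z : ℝ) : |cdf P z - cdf Q z| ≤ kolm P Q := by
  rw [kolm, mcdf_eq_cdf, mcdf_eq_cdf]
  exact le_ciSup ⟨(1 : ℝ), by
    rintro _ ⟨y, rfl⟩
    exact abs_sub_le_of_nonneg_of_le (cdf_nonneg P y) (cdf_le_one P y) (cdf_nonneg Q y)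
      (cdf_le_one Q y)⟩ z

theorem integral_abs_cdf_sub_le_mul_kolm {P Q : Measure ℝ} [IsProbabilityMeasure P]
    [IsProbabilityMeasure Q] {a b : ℝ} (hab : a ≤ b) (hP : P (Icc a b)ᶜ = 0)
    (hQ : Q (Icc a b)ᶜ = 0) :
    ∫ z, |cdf P z - cdf Q z| ≤ (b - a) * kolm P Q := by
  have hzero : ∀ z ∉ Icc a b, |cdf P z - cdf Q z| = 0 := fun z hz => by
    rcases not_and_or.1 hz with hz | hz
    · rw [cdf_eq_zero_of_lt hP (not_le.1 hz), cdf_eq_zero_of_lt hQ (not_le.1 hz), sub_zero,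
        abs_zero]
    · rw [cdf_eq_one_of_le hP (not_le.1 hz).le, cdf_eq_one_of_le hQ (not_le.1 hz).le, sub_self,
        abs_zero]
  rw [← setIntegral_eq_integral_of_forall_compl_eq_zero hzero]
  calc ∫ z in Icc a b, |cdf P z - cdf Q z| ≤ ‖∫ z in Icc a b, |cdf P z - cdf Q z|‖ :=
        Real.le_norm_self _
    _ ≤ kolm P Q * volume.real (Icc a b) :=
        norm_setIntegral_le_of_norm_le_const measure_Icc_lt_top fun z _ => by
          rw [Real.norm_eq_abs, abs_abs]
          exact abs_cdf_sub_cdf_le_kolm P Q z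
    _ = (b - a) * kolm P Q := by rw [Real.volume_real_Icc_of_le hab, mul_comm]

theorem stmt8 (P Q : Measure ℝ) [IsProbabilityMeasure P] [IsProbabilityMeasure Q]
    (R : ℝ) (hR : 0 ≤ R)
    (hPs : P (Set.Icc (-R) R)ᶜ = 0) (hQs : Q (Set.Icc (-R) R)ᶜ = 0) :
    sqW2 P Q ≤ 2 * R * ∫ z : ℝ, |mcdf P z - mcdf Q z| ∧
    2 * R * (∫ z : ℝ, |mcdf P z - mcdf Q z|) ≤ 4 * R ^ 2 * kolm P Q ∧
    sqW2 P Q ≤ 4 * R ^ 2 * kolm P Q := by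
  rw [mcdf_eq_cdf P, mcdf_eq_cdf Q]
  have hW := sqW2_le_mul_integral_abs_cdf_sub hPs hQs
  have hK := integral_abs_cdf_sub_le_mul_kolm (by linarith) hPs hQs
  rw [sub_neg_eq_add, ← two_mul] at hW hK
  have hKR : 2 * R * ∫ z, |cdf P z - cdf Q z| ≤ 4 * R ^ 2 * kolm P Q :=
    calc 2 * R * ∫ z, |cdf P z - cdf Q z| ≤ 2 * R * (2 * R * kolm P Q) :=
          mul_le_mul_of_nonneg_left hK (by positivity)
      _ = 4 * R ^ 2 * kolm P Q := by ring
  exact ⟨hW, hKR, hW.trans hKR⟩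

end
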